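/- arXiv:2508.03930 — 2 statements merged into one kernel-verified Lean document; each statement's English description precedes it below -/
import Mathlib

section
/- If a square X^2 is generated by a periodic string U (i.e., X^2 occurs in U and per(X^2) = per(U)), then |X| is a multiple of per(U). -/
open List

variable {α : Type*}

/-- `frag T a b` is the fragment `T[a..b]` (inclusive, 0-based). -/
def frag (T : List α) (a b : ℕ) : List α := (T.drop a).take (b + 1 - a)

/-- `p` is a period of `S`: `0 < p ≤ |S|` and `S[i] = S[i+p]` for all valid `i`. -/
def IsPeriodOf (p : ℕ) (S : List α) : Prop :=
  0 < p ∧ p ≤ S.length ∧ ∀ i : ℕ, i + p < S.length → S[i]? = S[i + p]?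

/-- The smallest period of `S`. -/
noncomputable def minPeriod (S : List α) : ℕ := sInf {p | IsPeriodOf p S}

/-- `T[a..b]` is a run: periodic (its smallest period occurs at least twice)
and maximal on both sides. -/
def IsRun (T : List α) (a b : ℕ) : Prop :=
  a ≤ b ∧ b < T.length ∧
  2 * minPeriod (frag T a b) ≤ b + 1 - a ∧
  (a = 0 ∨ T[a - 1]? ≠ T[a - 1 + minPeriod (frag T a b)]?) ∧
  (b = T.length - 1 ∨ T[b + 1]? ≠ T[b + 1 - minPeriod (frag T a b)]?)

/-- `W` occurs in `T` at position `s`. -/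
def OccursAt (T : List α) (s : ℕ) (W : List α) : Prop :=
  s + W.length ≤ T.length ∧ (T.drop s).take W.length = W

/-- The set of distinct square substrings of `T`. -/
def Squares (T : List α) : Set (List α) :=
  {W | ∃ X : List α, X ≠ [] ∧ W = X ++ X ∧ W <:+: T}

/-- A non-empty string is primitive if it is not a proper power. -/
def Primitive (U : List α) : Prop :=
  U ≠ [] ∧ ∀ (V : List α) (k : ℕ), U = (List.replicate k V).flatten → k = 1

/-- Cyclic rotation moving the first `c` characters to the end. -/
def rot (c : ℕ) (L : List α) : List α := L.drop c ++ L.take c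

/-- `lam` is the Lyndon root of a periodic string `S`: the lexicographically
smallest rotation of `S[0..per(S))`. -/
def LyndonRootOf [LinearOrder α] (S lam : List α) : Prop :=
  (∃ c < minPeriod S, lam = rot c (S.take (minPeriod S))) ∧
  ∀ c < minPeriod S, lam ≤ rot c (S.take (minPeriod S))

/-- Squares generated by a periodic string `U`: squares contained in `U`
whose smallest period equals that of `U`. -/
def FragSquares (U : List α) : Set (List α) :=
  {W | ∃ X : List α, X ≠ [] ∧ W = X ++ X ∧ W <:+: U ∧ minPeriod W = minPeriod U}

/-- `subper U`: the minimum of `per(X)` over squares `X²` generated by `U`. -/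
noncomputable def subper (U : List α) : ℕ :=
  sInf {q | ∃ X : List α, X ≠ [] ∧ (X ++ X) <:+: U ∧
    minPeriod (X ++ X) = minPeriod U ∧ minPeriod X = q}

/-- Fragments `[a..b]` and `[a'..b']` are neighboring:
`[a-1..b+1] ∩ [a'..b'] ≠ ∅`. -/
def Neighboring (a b a' b' : ℕ) : Prop := a ≤ b' + 1 ∧ a' ≤ b + 1

/-- `T[x..y]` is a layer of the pyramid of the neighboring runs
`F = T[a..b]` and `F' = T[a'..b']` (with `a < a'`): a subperiodic run `R`
with `subper(R) = per(F)` such that `R ∩ (F ∪ F')` is periodic with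
period `per(R)`. -/
def IsLayer (T : List α) (a b a' b' x y : ℕ) : Prop :=
  IsRun T x y ∧
  4 * subper (frag T x y) ≤ minPeriod (frag T x y) ∧
  subper (frag T x y) = minPeriod (frag T a b) ∧
  2 * minPeriod (frag T x y) ≤ min y b' + 1 - max x a ∧
  IsPeriodOf (minPeriod (frag T x y)) (frag T (max x a) (min y b'))

/-- A `τ`-synchronizing set of `T` (Kempa–Kociumaka): consistency and density. -/
def SyncSet (T : List α) (τ : ℕ) (S : Set ℕ) : Prop :=
  (∀ i ∈ S, i + 2 * τ ≤ T.length) ∧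
  (∀ i j : ℕ, i + 2 * τ ≤ T.length → j + 2 * τ ≤ T.length →
    (T.drop i).take (2 * τ) = (T.drop j).take (2 * τ) → (i ∈ S ↔ j ∈ S)) ∧
  (∀ i : ℕ, i + 3 * τ - 1 ≤ T.length →
    ((∀ k ∈ S, k < i ∨ i + τ ≤ k) ↔
      3 * minPeriod ((T.drop i).take (3 * τ - 1)) ≤ τ))

/-! `|X|` is a period of `X²` and `per(X²) + |X| ≤ |X²|`, so by the Fine–Wilf lemma
`gcd(per(X²), |X|)` is a period of `X²`; minimality of `per(X²)` makes it equal to `per(X²)`,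
which therefore divides `|X|`. -/

theorem isPeriodOf_iff_hasPeriod {p : ℕ} {S : List α} :
    IsPeriodOf p S ↔ 0 < p ∧ p ≤ S.length ∧ S.HasPeriod p := by
  rw [IsPeriodOf, hasPeriod_iff_getElem?]
  refine and_congr_right fun _ => and_congr_right fun _ => ?_
  exact forall_congr' fun i => ⟨fun h hi => h (by omega), fun h hi => h (by omega)⟩

theorem IsPeriodOf.gcd {p q : ℕ} {S : List α} (hp : IsPeriodOf p S) (hq : IsPeriodOf q S)
    (hn : p + q ≤ S.length) : IsPeriodOf (p.gcd q) S := by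
  rw [isPeriodOf_iff_hasPeriod] at hp hq ⊢
  obtain ⟨hp0, hpS, hp⟩ := hp
  exact ⟨Nat.gcd_pos_of_pos_left q hp0, (Nat.gcd_le_left q hp0).trans hpS,
    hp.gcd hq.2.2 (by omega)⟩

theorem minPeriod_isPeriodOf {p : ℕ} {S : List α} (h : IsPeriodOf p S) :
    IsPeriodOf (minPeriod S) S :=
  Nat.sInf_mem (s := {p | IsPeriodOf p S}) ⟨p, h⟩

theorem minPeriod_le {p : ℕ} {S : List α} (h : IsPeriodOf p S) : minPeriod S ≤ p :=
  Nat.sInf_le h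

theorem IsPeriodOf.minPeriod_dvd {p : ℕ} {S : List α} (h : IsPeriodOf p S)
    (hn : minPeriod S + p ≤ S.length) : minPeriod S ∣ p := by
  have hmin := minPeriod_isPeriodOf h
  have hgcd : (minPeriod S).gcd p = minPeriod S :=
    le_antisymm (Nat.gcd_le_left p hmin.1) (minPeriod_le (hmin.gcd h hn))
  exact hgcd ▸ Nat.gcd_dvd_right _ _

theorem isPeriodOf_length_append_self {X : List α} (hX : X ≠ []) :
    IsPeriodOf X.length (X ++ X) := by
  refine isPeriodOf_iff_hasPeriod.2 ⟨length_pos_iff.2 hX, by simp, ?_⟩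
  simp [HasPeriod]

theorem minPeriod_append_self_dvd_length (X : List α) : minPeriod (X ++ X) ∣ X.length := by
  rcases eq_or_ne X [] with rfl | hX
  · exact dvd_zero _
  have hX2 := isPeriodOf_length_append_self hX
  refine hX2.minPeriod_dvd ?_
  have := minPeriod_le hX2
  simp only [length_append]
  omega

theorem root_length_multiple_of_period_general (U X : List α)
    (heq : minPeriod (X ++ X) = minPeriod U) :
    minPeriod U ∣ X.length :=
  heq ▸ minPeriod_append_self_dvd_length X

/-- If a square `X²` is generated by a periodic string `U`, then `|X|` is a
multiple of `per(U)`. -/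
theorem root_length_multiple_of_period (U X : List α) (hX : X ≠ [])
    (hUper : 2 * minPeriod U ≤ U.length)
    (hocc : (X ++ X) <:+: U)
    (heq : minPeriod (X ++ X) = minPeriod U) :
    minPeriod U ∣ X.length :=
  root_length_multiple_of_period_general U X heq
end

section
/- If two runs R and R' of a string T generate a common square (frag-squares(R) ∩ frag-squares(R') ≠ ∅), then R and R' have the same Lyndon root. -/
open List

variable {α : Type*}

/-! A string with period `p` is determined by its first `p` letters (`S[i] = S[i % p]`), so each
of its length-`p` windows is a rotation of `S[0..p)`, and its Lyndon root, the least such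
rotation, depends only on the conjugacy class of `S[0..p)`. A square `X²` generated by both
runs is a common factor with the same smallest period `p`, so its first `p` letters are
conjugate to the period blocks of both runs. -/

lemma minPeriod_le_length (S : List α) : minPeriod S ≤ S.length := by
  rcases eq_or_ne S [] with rfl | hS
  · simp [minPeriod, IsPeriodOf, Nat.pos_iff_ne_zero]
  · exact Nat.sInf_le ⟨length_pos_iff.mpr hS, le_rfl, fun i hi => by omega⟩

lemma length_take_minPeriod (S : List α) : (S.take (minPeriod S)).length = minPeriod S :=
  length_take_of_le (minPeriod_le_length S)

lemma isPeriodOf_minPeriod {S : List α} (h : 0 < minPeriod S) : IsPeriodOf (minPeriod S) S :=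
  Nat.sInf_mem (Nat.nonempty_of_pos_sInf h)

lemma IsPeriodOf.getElem?_mod {p : ℕ} {S : List α} (hp : IsPeriodOf p S) {i : ℕ}
    (hi : i < S.length) : S[i]? = S[i % p]? := by
  induction i using Nat.strong_induction_on with
  | _ i ih =>
    rcases lt_or_ge i p with hip | hip
    · rw [Nat.mod_eq_of_lt hip]
    · have := hp.1
      rw [Nat.mod_eq_sub_mod hip, ← ih (i - p) (by omega) (by omega),
        hp.2.2 (i - p) (by omega), Nat.sub_add_cancel hip]

lemma IsPeriodOf.take_drop_eq_rotate {p s : ℕ} {S : List α} (hp : IsPeriodOf p S)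
    (hs : s + p ≤ S.length) : (S.drop s).take p = (S.take p).rotate s := by
  apply ext_getElem (by simp; omega)
  intro k hk _
  have hk' : s + k < S.length := by simp at hk; omega
  simp only [getElem_take, getElem_drop, getElem_rotate, length_take,
    min_eq_left (by omega : p ≤ S.length)]
  rw [← Option.some_inj, ← getElem?_eq_getElem, ← getElem?_eq_getElem, hp.getElem?_mod hk',
    Nat.add_comm]

lemma IsPeriodOf.isRotated_take_of_infix {p : ℕ} {S W : List α} (hp : IsPeriodOf p S)
    (hW : W <:+: S) (hpW : p ≤ W.length) : S.take p ~r W.take p := by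
  obtain ⟨P, Q, rfl⟩ := hW
  refine ⟨P.length, (hp.take_drop_eq_rotate (by simp; omega)).symm.trans ?_⟩
  simp [take_append_of_le_length hpW]

lemma isRotated_take_minPeriod_of_infix {S W : List α} (hW : W <:+: S)
    (h : minPeriod W = minPeriod S) : S.take (minPeriod S) ~r W.take (minPeriod W) := by
  rcases Nat.eq_zero_or_pos (minPeriod S) with h0 | hpos
  · simp [h0, h]
  · rw [h]
    exact (isPeriodOf_minPeriod hpos).isRotated_take_of_infix hW (h ▸ minPeriod_le_length W)

lemma rot_eq_rotate {c : ℕ} {L : List α} (hc : c ≤ L.length) : rot c L = L.rotate c :=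
  (rotate_eq_drop_append_take hc).symm

lemma isRotated_iff_exists_rot {L M : List α} (hL : L ≠ []) :
    L ~r M ↔ ∃ c < L.length, M = rot c L := by
  constructor
  · rintro ⟨n, rfl⟩
    have hc := Nat.mod_lt n (length_pos_iff.mpr hL)
    exact ⟨n % L.length, hc, by rw [rot_eq_rotate hc.le, rotate_mod]⟩
  · rintro ⟨c, hc, rfl⟩
    exact ⟨c, (rot_eq_rotate hc.le).symm⟩

lemma lyndonRootOf_iff_isLeast [LinearOrder α] {S lam : List α} (h : 0 < minPeriod S) :
    LyndonRootOf S lam ↔ IsLeast {M | S.take (minPeriod S) ~r M} lam := by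
  have hne : S.take (minPeriod S) ≠ [] :=
    ne_nil_of_length_pos ((length_take_minPeriod S).symm ▸ h)
  simp only [LyndonRootOf, IsLeast, lowerBounds, Set.mem_ofPred_eq,
    isRotated_iff_exists_rot hne, length_take_minPeriod]
  exact and_congr_right fun _ => by grind

lemma lyndonRootOf_congr [LinearOrder α] {U V lam : List α}
    (h : U.take (minPeriod U) ~r V.take (minPeriod V)) :
    LyndonRootOf U lam ↔ LyndonRootOf V lam := by
  have hp : minPeriod U = minPeriod V := by
    simpa only [length_take_minPeriod] using h.perm.length_eq
  rcases Nat.eq_zero_or_pos (minPeriod U) with h0 | hpos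
  -- `minPeriod` is `0` only for `[]`, which has no Lyndon root.
  · simp [LyndonRootOf, h0, ← hp]
  · rw [lyndonRootOf_iff_isLeast hpos, lyndonRootOf_iff_isLeast (hp ▸ hpos)]
    congr! 2
    exact Set.ext fun M => ⟨h.symm.trans, h.trans⟩

theorem common_square_same_lyndon_root_general [LinearOrder α] (T : List α)
    (a b a' b' : ℕ)
    (X : List α)
    (g1 : (X ++ X) <:+: frag T a b ∧
      minPeriod (X ++ X) = minPeriod (frag T a b))
    (g2 : (X ++ X) <:+: frag T a' b' ∧
      minPeriod (X ++ X) = minPeriod (frag T a' b')) :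
    ∀ lam : List α, LyndonRootOf (frag T a b) lam ↔ LyndonRootOf (frag T a' b') lam := fun _ =>
  lyndonRootOf_congr ((isRotated_take_minPeriod_of_infix g1.1 g1.2).trans
    (isRotated_take_minPeriod_of_infix g2.1 g2.2).symm)

/-- If two runs of `T` generate a common square, they have the same
Lyndon root. -/
theorem common_square_same_lyndon_root [LinearOrder α] (T : List α)
    (a b a' b' : ℕ) (h1 : IsRun T a b) (h2 : IsRun T a' b')
    (X : List α) (hX : X ≠ [])
    (g1 : (X ++ X) <:+: frag T a b ∧
      minPeriod (X ++ X) = minPeriod (frag T a b))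
    (g2 : (X ++ X) <:+: frag T a' b' ∧
      minPeriod (X ++ X) = minPeriod (frag T a' b')) :
    ∀ lam : List α, LyndonRootOf (frag T a b) lam ↔ LyndonRootOf (frag T a' b') lam :=
  common_square_same_lyndon_root_general T a b a' b' X g1 g2
end
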